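/- Let x₁,…,x_n ∈ ℝ be the positions of n ≥ 2 distinct stations on the line, with powers P₁,…,P_n > 0, noise N ≥ 0 and threshold β > 0, and define for x ∉ {x₂,…,x_n} the function Q(x) = Σ_{i=2}^{n} P_i·((x−x₁)/(x−x_i))² + N·(x−x₁)² − P₁/β. Let [a,b] be a closed interval with x₁ < a ≤ b that contains no station, and assume that either (C1) x_i ≥ x₁ for every i, or (C2) no station other than s₁ lies in the interval [x₁, a]. Then Q has no local maximum in [a,b]; in particular Q(x) ≤ max(Q(a), Q(b)) for every x ∈ [a,b]. -/

import Mathlib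

open Finset

private lemma hasDerivAt_ratio_sq (p c t : ℝ) (h : t ≠ c) :
    HasDerivAt (fun s => ((s - p) / (s - c)) ^ 2)
      (2 * (t - p) * (p - c) / (t - c) ^ 3) t := by
  have hc : t - c ≠ 0 := sub_ne_zero.mpr h
  have h1 : HasDerivAt (fun s : ℝ => s - p) 1 t := (hasDerivAt_id t).sub_const p
  have h2 : HasDerivAt (fun s : ℝ => s - c) 1 t := (hasDerivAt_id t).sub_const c
  have hdiv := h1.div h2 hc
  have hpow : HasDerivAt (fun s => ((s - p) / (s - c)) ^ 2) _ t := hdiv.pow 2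
  convert hpow using 1
  simp only [Pi.div_apply]
  push_cast
  rw [pow_one, div_eq_iff (by positivity : ((t:ℝ) - c) ^ 3 ≠ 0)]
  field_simp
  ring_nf

private lemma hasDerivAt_ratio_sq' (p c t : ℝ) (h : t ≠ c) :
    HasDerivAt (fun s => 2 * (s - p) * (p - c) / (s - c) ^ 3)
      (2 * (c - p) * (2 * (t - p) + (c - p)) / (t - c) ^ 4) t := by
  have hc : t - c ≠ 0 := sub_ne_zero.mpr h
  have h1 : HasDerivAt (fun s : ℝ => 2 * (s - p) * (p - c)) (2 * (p - c)) t := by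
    simpa using (((hasDerivAt_id t).sub_const p).const_mul 2).mul_const (p - c)
  have h2 : HasDerivAt (fun s : ℝ => (s - c) ^ 3) (3 * (t - c) ^ 2 * 1) t :=
    ((hasDerivAt_id t).sub_const c).pow 3
  have hdiv : HasDerivAt (fun s => 2 * (s - p) * (p - c) / (s - c) ^ 3) _ t :=
    h1.div h2 (pow_ne_zero 3 hc)
  convert hdiv using 1
  field_simp
  ring

/-- The characteristic polynomial `Q` of the reception zone of station `i` in a
one-dimensional network with positions `x`, powers `P`, noise `N` and threshold `β`:
`Q(t) = ∑_{j ≠ i} P_j ((t - x_i)/(t - x_j))² + N (t - x_i)² - P_i / β`. -/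
noncomputable def Qpoly {n : ℕ} (x P : Fin n → ℝ) (N β : ℝ) (i : Fin n) (t : ℝ) : ℝ :=
  (∑ j ∈ Finset.univ.erase i, P j * ((t - x i) / (t - x j)) ^ 2)
    + N * (t - x i) ^ 2 - P i / β

theorem Qpoly_no_local_max_configC1C2 {n : ℕ} (hn : 2 ≤ n)
    (x : Fin n → ℝ) (hx : Function.Injective x)
    (P : Fin n → ℝ) (hP : ∀ j, 0 < P j)
    (N β : ℝ) (hN : 0 ≤ N) (hβ : 0 < β)
    (i : Fin n) (a b : ℝ) (hia : x i < a) (hab : a ≤ b)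
    (hfree : ∀ j, x j ∉ Set.Icc a b)
    (hconf : (∀ j, x i ≤ x j) ∨ (∀ j, j ≠ i → x j ∉ Set.Icc (x i) a)) :
    (∀ t ∈ Set.Ioo a b, ¬ IsLocalMax (Qpoly x P N β i) t) ∧
    ∀ t ∈ Set.Icc a b,
      Qpoly x P N β i t ≤ max (Qpoly x P N β i a) (Qpoly x P N β i b) := by
  set p := x i with hp
  set E := Finset.univ.erase i with hE
  set f : ℝ → ℝ := Qpoly x P N β i with hf
  -- the interval contains no pole
  have hxj : ∀ j ∈ E, x j < a ∨ b < x j := by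
    intro j _
    rcases lt_or_ge (x j) a with h | h
    · exact Or.inl h
    · right
      by_contra hb
      push_neg at hb
      exact hfree j ⟨h, hb⟩
  have hne_pole : ∀ t ∈ Set.Icc a b, ∀ j ∈ E, t ≠ x j := by
    intro t ht j _ h
    exact hfree j (h ▸ ht)
  -- E is nonempty
  have hEne : E.Nonempty := by
    obtain ⟨j, hj⟩ := Fintype.exists_ne_of_one_lt_card (by simp; omega) i
    exact ⟨j, Finset.mem_erase.mpr ⟨hj, Finset.mem_univ j⟩⟩
  -- first and second "derivative" candidates
  set Q1 : ℝ → ℝ := fun t =>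
    (∑ j ∈ E, P j * (2 * (t - p) * (p - x j) / (t - x j) ^ 3)) + N * (2 * (t - p))
    with hQ1def
  set Q2 : ℝ → ℝ := fun t =>
    (∑ j ∈ E, P j * (2 * (x j - p) * (2 * (t - p) + (x j - p)) / (t - x j) ^ 4)) + N * 2
    with hQ2def
  have hD1 : ∀ t : ℝ, (∀ j ∈ E, t ≠ x j) → HasDerivAt f (Q1 t) t := by
    intro t ht
    have hsum : HasDerivAt (fun s => ∑ j ∈ E, P j * ((s - p) / (s - x j)) ^ 2)
        (∑ j ∈ E, P j * (2 * (t - p) * (p - x j) / (t - x j) ^ 3)) t := by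
      apply HasDerivAt.fun_sum
      intro j hj
      exact (hasDerivAt_ratio_sq p (x j) t (ht j hj)).const_mul (P j)
    have hnoise : HasDerivAt (fun s => N * (s - p) ^ 2) (N * (2 * (t - p))) t := by
      have h0 := (((hasDerivAt_id t).sub_const p).pow 2).const_mul N
      simpa using h0
    exact (hsum.add hnoise).sub_const (P i / β)
  have hD2 : ∀ t : ℝ, (∀ j ∈ E, t ≠ x j) → HasDerivAt Q1 (Q2 t) t := by
    intro t ht
    have hsum : HasDerivAt
        (fun s => ∑ j ∈ E, P j * (2 * (s - p) * (p - x j) / (s - x j) ^ 3))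
        (∑ j ∈ E, P j * (2 * (x j - p) * (2 * (t - p) + (x j - p)) / (t - x j) ^ 4)) t := by
      apply HasDerivAt.fun_sum
      intro j hj
      exact (hasDerivAt_ratio_sq' p (x j) t (ht j hj)).const_mul (P j)
    have hnoise : HasDerivAt (fun s => N * (2 * (s - p))) (N * 2) t := by
      have h0 := (((hasDerivAt_id t).sub_const p).const_mul 2).const_mul N
      simpa using h0
    exact hsum.add hnoise
  have hcont : ContinuousOn f (Set.Icc a b) := fun t ht =>
    (hD1 t (hne_pole t ht)).continuousAt.continuousWithinAt
  rcases hconf with hC1 | hC2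
  · -- Case C1 : Q is strictly convex
    have hQ2pos : ∀ t ∈ Set.Ioo a b, 0 < Q2 t := by
      intro t ht
      have htp : p < t := lt_trans hia ht.1
      have hterm : ∀ j ∈ E, 0 < P j * (2 * (x j - p) * (2 * (t - p) + (x j - p)) / (t - x j) ^ 4) := by
        intro j hj
        have hjp : p < x j := lt_of_le_of_ne (hC1 j)
          (fun h => (Finset.mem_erase.mp hj).1 (hx h).symm)
        have htj : t - x j ≠ 0 := sub_ne_zero.mpr (hne_pole t ⟨le_of_lt ht.1, le_of_lt ht.2⟩ j hj)
        have hnum : 0 < 2 * (x j - p) * (2 * (t - p) + (x j - p)) := by nlinarith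
        exact mul_pos (hP j) (div_pos hnum (by positivity))
      have hsum : 0 < ∑ j ∈ E, P j * (2 * (x j - p) * (2 * (t - p) + (x j - p)) / (t - x j) ^ 4) :=
        Finset.sum_pos hterm hEne
      have : 0 ≤ N * 2 := by linarith
      simp only [hQ2def]
      linarith
    have hconv : StrictConvexOn ℝ (Set.Icc a b) f := by
      apply strictConvexOn_of_deriv2_pos (convex_Icc a b) hcont
      intro t ht
      rw [interior_Icc] at ht
      have htmem : t ∈ Set.Icc a b := Set.Ioo_subset_Icc_self ht
      have hev : deriv f =ᶠ[nhds t] Q1 := by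
        apply Filter.eventuallyEq_of_mem (isOpen_Ioo.mem_nhds ht)
        intro s hs
        exact (hD1 s (hne_pole s (Set.Ioo_subset_Icc_self hs))).deriv
      have h2 : deriv (deriv f) t = Q2 t := by
        rw [hev.deriv_eq]
        exact (hD2 t (hne_pole t htmem)).deriv
      have : deriv^[2] f t = deriv (deriv f) t := by
        simp [Function.iterate_succ_apply', Function.iterate_one]
      rw [this, h2]
      exact hQ2pos t ht
    constructor
    · intro t ht hloc
      have hev : ∀ᶠ y in nhds t, f y ≤ f t ∧ y ∈ Set.Ioo a b :=
        hloc.and (isOpen_Ioo.eventually_mem ht)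
      obtain ⟨ε, hε, H⟩ := Metric.eventually_nhds_iff.mp hev
      set s := t - ε / 2 with hs
      set u := t + ε / 2 with hu
      have hds : dist s t < ε := by
        rw [Real.dist_eq]
        rw [hs]
        rw [abs_of_nonpos (by linarith)]
        linarith
      have hdu : dist u t < ε := by
        rw [Real.dist_eq, hu, abs_of_nonneg (by linarith)]
        linarith
      obtain ⟨hfs, hsmem⟩ := H hds
      obtain ⟨hfu, humem⟩ := H hdu
      have hsu : s ≠ u := by
        rw [hs, hu]; intro h; nlinarith [hε]
      have hmid : (1/2 : ℝ) • s + (1/2 : ℝ) • u = t := by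
        simp only [smul_eq_mul, hs, hu]; ring
      have := hconv.2 (Set.Ioo_subset_Icc_self hsmem) (Set.Ioo_subset_Icc_self humem)
        hsu (by norm_num : (0:ℝ) < 1/2) (by norm_num : (0:ℝ) < 1/2) (by norm_num)
      rw [hmid] at this
      simp only [smul_eq_mul] at this
      linarith
    · intro t ht
      have hseg : t ∈ segment ℝ a b := by rwa [segment_eq_Icc hab]
      exact hconv.convexOn.le_on_segment (Set.left_mem_Icc.mpr hab) (Set.right_mem_Icc.mpr hab) hseg
  · -- Case C2 : Q is strictly increasing
    have hQ1pos : ∀ t ∈ Set.Ioo a b, 0 < Q1 t := by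
      intro t ht
      have htp : p < t := lt_trans hia ht.1
      have hterm : ∀ j ∈ E, 0 < P j * (2 * (t - p) * (p - x j) / (t - x j) ^ 3) := by
        intro j hj
        have hji : j ≠ i := (Finset.mem_erase.mp hj).1
        have hnot := hC2 j hji
        rcases hxj j hj with hja | hjb
        · -- x j < a : then x j < p
          have hjp : x j < p := by
            by_contra h
            push_neg at h
            exact hnot ⟨h, le_of_lt hja⟩
          have h1 : 0 < 2 * (t - p) * (p - x j) := by nlinarith
          have h2 : (0:ℝ) < (t - x j) ^ 3 := by
            have : 0 < t - x j := by linarith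
            positivity
          exact mul_pos (hP j) (div_pos h1 h2)
        · -- b < x j
          have h1 : 2 * (t - p) * (p - x j) < 0 := by nlinarith [ht.2]
          have h2 : (t - x j) ^ 3 < 0 := by
            have h3 : t - x j < 0 := by linarith [ht.2]
            exact Odd.pow_neg ⟨1, by norm_num⟩ h3
          exact mul_pos (hP j) (div_pos_of_neg_of_neg h1 h2)
      have hsum : 0 < ∑ j ∈ E, P j * (2 * (t - p) * (p - x j) / (t - x j) ^ 3) :=
        Finset.sum_pos hterm hEne
      have : 0 ≤ N * (2 * (t - p)) := by nlinarith
      simp only [hQ1def]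
      linarith
    have hmono : StrictMonoOn f (Set.Icc a b) := by
      apply strictMonoOn_of_deriv_pos (convex_Icc a b) hcont
      intro t ht
      rw [interior_Icc] at ht
      rw [(hD1 t (hne_pole t (Set.Ioo_subset_Icc_self ht))).deriv]
      exact hQ1pos t ht
    constructor
    · intro t ht hloc
      have h1 : ∀ᶠ y in nhdsWithin t (Set.Ioi t), f y ≤ f t :=
        hloc.filter_mono nhdsWithin_le_nhds
      have h2 : Set.Ioo t b ∈ nhdsWithin t (Set.Ioi t) :=
        Ioo_mem_nhdsGT_of_mem ⟨le_refl t, ht.2⟩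
      obtain ⟨y, hy1, hy2⟩ := (h1.and (Filter.eventually_of_mem h2 fun y hy => hy)).exists
      have : f t < f y :=
        hmono (Set.Ioo_subset_Icc_self ht) ⟨le_of_lt (lt_trans ht.1 hy2.1), le_of_lt hy2.2⟩ hy2.1
      linarith
    · intro t ht
      have h1 : f t ≤ f b := by
        rcases eq_or_lt_of_le ht.2 with h | h
        · rw [h]
        · exact le_of_lt (hmono ht (Set.right_mem_Icc.mpr hab) h)
      exact le_trans h1 (le_max_right _ _)
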